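/- Define g^fg(α,γ,F*) = F*/(γ(1−α)) + (γ(1−α)−1)/(γ(1−α)) and g^rg(α,γ,F*) = F*·γ/(1+γα), for α ∈ [0,1), γ ∈ (0,1], F* ∈ [0,1]. If F* ≤ 1/2 then g^rg(α,γ,F*) ≥ g^fg(α,γ,F*) for all such α, γ. -/

import Mathlib

/-! Write `c = γ(1 - α) ∈ (0, 1]` and `e = γα ≥ 0`, so that `γ = c + e`. Clearing denominators,
the claim becomes `(F + c - 1)(1 + e) ≤ F c (c + e)`, which splits into `F + c - 1 ≤ F c²`
(this is where `F ≤ 1/2` enters, as `F (1 + c) ≤ 1`) and `e (F + c - 1) ≤ e F c`. -/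

lemma add_sub_one_le_mul_sq {F c : ℝ} (hF : F ≤ 1 / 2) (hc₀ : 0 ≤ c) (hc₁ : c ≤ 1) :
    F + c - 1 ≤ F * c ^ 2 := by
  have h : F * (1 + c) ≤ 1 := by nlinarith
  nlinarith

lemma add_sub_one_le_mul {F c : ℝ} (hF : F ≤ 1) (hc₁ : c ≤ 1) : F + c - 1 ≤ F * c := by
  nlinarith

lemma add_sub_one_div_le_mul_add_div {F c e : ℝ} (hF : F ≤ 1 / 2) (hc₀ : 0 < c) (hc₁ : c ≤ 1)
    (he : 0 ≤ e) : (F + c - 1) / c ≤ F * (c + e) / (1 + e) := by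
  rw [div_le_div_iff₀ hc₀ (by linarith)]
  have hsq := add_sub_one_le_mul_sq hF hc₀.le hc₁
  have hlin := mul_le_mul_of_nonneg_left (add_sub_one_le_mul (F := F) (by linarith) hc₁) he
  linear_combination hsq + hlin

theorem stmt_6_general (α γ Fstar : ℝ)
    (hα : 0 ≤ α ∧ α < 1) (hγ : 0 < γ ∧ γ ≤ 1)
    (hhalf : Fstar ≤ 1 / 2) :
    Fstar / (γ * (1 - α)) + (γ * (1 - α) - 1) / (γ * (1 - α))
      ≤ Fstar * γ / (1 + γ * α) := by
  obtain ⟨hα₀, hα₁⟩ := hα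
  obtain ⟨hγ₀, hγ₁⟩ := hγ
  have hc₀ : 0 < γ * (1 - α) := mul_pos hγ₀ (by linarith)
  have hc₁ : γ * (1 - α) ≤ 1 := by nlinarith
  have key := add_sub_one_div_le_mul_add_div hhalf hc₀ hc₁ (mul_nonneg hγ₀.le hα₀)
  rw [← add_div]
  convert key using 2 <;> ring

theorem stmt_6 (α γ Fstar : ℝ)
    (hα : 0 ≤ α ∧ α < 1) (hγ : 0 < γ ∧ γ ≤ 1)
    (hF : 0 ≤ Fstar ∧ Fstar ≤ 1) (hhalf : Fstar ≤ 1 / 2) :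
    Fstar / (γ * (1 - α)) + (γ * (1 - α) - 1) / (γ * (1 - α))
      ≤ Fstar * γ / (1 + γ * α) :=
  stmt_6_general α γ Fstar hα hγ hhalf
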